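/- arXiv:1310.2484 — 2 statements merged into one kernel-verified Lean document; each statement's English description precedes it below -/
import Mathlib

section
/- Let (w_l)_{l ≥ 0} be weights with w_l ≥ 1 and Σ_{l ≥ 0} w_l 2^{−l/2} < ∞, and let h = (h_{l,k} : l ≥ 0, 0 ≤ k < 2^l) be a double sequence of reals with ε := sup_{l ≥ 0} w_l^{-1} max_{0 ≤ k < 2^l} |h_{l,k}| < ∞. Then for every t ∈ [0,1] the double series Σ_{l ≥ 0} Σ_{0 ≤ k < 2^l} h_{l,k} ∫₀^t ψ_{l,k}(x) dx converges absolutely and satisfies | Σ_{l,k} h_{l,k} ∫₀^t ψ_{l,k} | ≤ ( Σ_{l ≥ 0} w_l 2^{−l/2 − 1} ) · ε. -/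
open MeasureTheory

/-- The Haar wavelet `ψ_{l,k}` on `[0,1]`. -/
noncomputable def haar (l k : ℕ) (x : ℝ) : ℝ :=
  if (k : ℝ) / 2 ^ l < x ∧ x ≤ ((k : ℝ) + 1 / 2) / 2 ^ l then (2 : ℝ) ^ ((l : ℝ) / 2)
  else if ((k : ℝ) + 1 / 2) / 2 ^ l < x ∧ x ≤ ((k : ℝ) + 1) / 2 ^ l then
    -((2 : ℝ) ^ ((l : ℝ) / 2))
  else 0

/-! On level `l` the primitive `t ↦ ∫₀ᵗ ψ_{l,k}` is a tent of height `2^{-l/2-1}` supported in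
the dyadic interval `(k 2^{-l}, (k+1) 2^{-l})`. These intervals are disjoint, so for fixed `t` at
most one term of level `l` is nonzero, and the level-`l` sum is at most `ε w_l 2^{-l/2-1}`.
Summing over `l` gives absolute convergence and the bound. -/

open Set

lemma Finset.sum_le_of_support_subsingleton {ι : Type*} [Fintype ι] {f : ι → ℝ} {B : ℝ}
    (hB : 0 ≤ B) (hf : ∀ i, f i ≤ B) (hsupp : (Function.support f).Subsingleton) :
    ∑ i, f i ≤ B := by
  obtain h | ⟨i, hi⟩ := hsupp.eq_empty_or_singleton
  · rw [Finset.sum_eq_zero fun i _ ↦ Function.notMem_support.mp (h ▸ Set.notMem_empty i)]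
    exact hB
  · rw [Finset.sum_eq_single i (fun j _ hj ↦ Function.notMem_support.mp (hi ▸ hj))
      (by simp)]
    exact hf i

section Sigma

variable {α : Type*} {β : α → Type*} [∀ a, Fintype (β a)] {F : (Σ a, β a) → ℝ} {g : α → ℝ}

lemma summable_abs_sigma_of_sum_abs_le (hg : Summable g) (hF : ∀ a, ∑ b, |F ⟨a, b⟩| ≤ g a) :
    Summable fun p ↦ |F p| :=
  (summable_sigma_of_nonneg fun _ ↦ abs_nonneg _).mpr
    ⟨fun _ ↦ .of_finite, hg.of_nonneg_of_le (fun _ ↦ tsum_nonneg fun _ ↦ abs_nonneg _)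
      fun a ↦ (tsum_fintype _).trans_le (hF a)⟩

lemma abs_tsum_sigma_le_of_sum_abs_le (hg : Summable g) (hF : ∀ a, ∑ b, |F ⟨a, b⟩| ≤ g a) :
    |∑' p, F p| ≤ ∑' a, g a := by
  have hFabs := summable_abs_sigma_of_sum_abs_le hg hF
  have hfiber (a : α) : ∑' b, |F ⟨a, b⟩| ≤ g a := (tsum_fintype _).trans_le (hF a)
  calc |∑' p, F p| ≤ ∑' p, |F p| := norm_tsum_le_tsum_norm (f := F) hFabs
    _ = ∑' a, ∑' b, |F ⟨a, b⟩| := hFabs.tsum_sigma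
    _ ≤ ∑' a, g a := hFabs.sigma.tsum_le_tsum hfiber hg

end Sigma

section Tent

variable {a m b t : ℝ}

lemma abs_tent_le (ham : a ≤ m) (hmid : m - a = b - m) :
    |max (min t m - a) 0 - max (min t b - m) 0| ≤ m - a :=
  abs_sub_le_of_nonneg_of_le (le_max_right _ _)
    (max_le (by linarith [min_le_right t m]) (by linarith))
    (le_max_right _ _) (max_le (by linarith [min_le_right t b]) (by linarith))

lemma tent_eq_zero (ham : a ≤ m) (hmid : m - a = b - m) (ht : t ≤ a ∨ b ≤ t) :
    max (min t m - a) 0 - max (min t b - m) 0 = 0 := by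
  rcases ht with ht | ht
  · rw [min_eq_left (by linarith), min_eq_left (by linarith), max_eq_right (by linarith),
      max_eq_right (by linarith), sub_zero]
  · rw [min_eq_right (by linarith), min_eq_right ht, max_eq_left (by linarith),
      max_eq_left (by linarith), hmid, sub_self]

end Tent

lemma haar_eq_indicator_sub_indicator (l k : ℕ) :
    haar l k =
      (Ioc ((k : ℝ) / 2 ^ l) (((k : ℝ) + 1 / 2) / 2 ^ l)).indicator
        (fun _ ↦ (2 : ℝ) ^ ((l : ℝ) / 2)) -
      (Ioc (((k : ℝ) + 1 / 2) / 2 ^ l) (((k : ℝ) + 1) / 2 ^ l)).indicator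
        (fun _ ↦ (2 : ℝ) ^ ((l : ℝ) / 2)) := by
  funext x
  simp only [haar, Pi.sub_apply, indicator_apply, mem_Ioc]
  split_ifs with h₁ h₂ <;> first | linarith [h₁.2, h₂.1] | ring

lemma intervalIntegrable_indicator_Ioc_const (a b c t₁ t₂ : ℝ) :
    IntervalIntegrable ((Ioc a b).indicator fun _ ↦ c) volume t₁ t₂ :=
  (intervalIntegrable_iff.mpr <|
    ((integrableOn_const_iff).mpr (Or.inr measure_Ioc_lt_top)).indicator measurableSet_Ioc)

lemma intervalIntegral_indicator_Ioc_const {a t : ℝ} (b c : ℝ) (ha : 0 ≤ a) (ht : 0 ≤ t) :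
    ∫ x in (0 : ℝ)..t, (Ioc a b).indicator (fun _ ↦ c) x = max (min t b - a) 0 * c := by
  rw [intervalIntegral.integral_of_le ht, setIntegral_indicator measurableSet_Ioc,
    Ioc_inter_Ioc, setIntegral_const, Real.volume_real_Ioc, smul_eq_mul, max_eq_right ha]

lemma integral_haar (l k : ℕ) {t : ℝ} (ht : 0 ≤ t) :
    ∫ x in (0 : ℝ)..t, haar l k x =
      (max (min t (((k : ℝ) + 1 / 2) / 2 ^ l) - (k : ℝ) / 2 ^ l) 0 -
        max (min t (((k : ℝ) + 1) / 2 ^ l) - ((k : ℝ) + 1 / 2) / 2 ^ l) 0) *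
        (2 : ℝ) ^ ((l : ℝ) / 2) := by
  rw [haar_eq_indicator_sub_indicator]
  simp only [Pi.sub_apply]
  rw [intervalIntegral.integral_sub (intervalIntegrable_indicator_Ioc_const ..)
      (intervalIntegrable_indicator_Ioc_const ..),
    intervalIntegral_indicator_Ioc_const _ _ (by positivity) ht,
    intervalIntegral_indicator_Ioc_const _ _ (by positivity) ht, sub_mul]

lemma abs_integral_haar_le (l k : ℕ) {t : ℝ} (ht : 0 ≤ t) :
    |∫ x in (0 : ℝ)..t, haar l k x| ≤ (2 : ℝ) ^ (-(l : ℝ) / 2 - 1) := by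
  have hwidth : ((k : ℝ) + 1 / 2) / 2 ^ l - (k : ℝ) / 2 ^ l = (2 : ℝ) ^ (-(l : ℝ) - 1) := by
    rw [Real.rpow_sub_one two_ne_zero, Real.rpow_neg zero_le_two, Real.rpow_natCast]
    ring
  rw [integral_haar l k ht, abs_mul, abs_of_nonneg (Real.rpow_nonneg zero_le_two _)]
  calc _ ≤ (2 : ℝ) ^ (-(l : ℝ) - 1) * (2 : ℝ) ^ ((l : ℝ) / 2) := by
        gcongr
        rw [← hwidth]
        exact abs_tent_le (by gcongr; norm_num) (by ring)
    _ = (2 : ℝ) ^ (-(l : ℝ) / 2 - 1) := by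
        rw [← Real.rpow_add zero_lt_two]
        ring_nf

lemma integral_haar_eq_zero (l k : ℕ) {t : ℝ} (ht₀ : 0 ≤ t)
    (ht : t ∉ Ioo ((k : ℝ) / 2 ^ l) (((k : ℝ) + 1) / 2 ^ l)) :
    ∫ x in (0 : ℝ)..t, haar l k x = 0 := by
  rw [integral_haar l k ht₀, tent_eq_zero (by gcongr; norm_num) (by ring), zero_mul]
  simpa only [mem_Ioo, not_and_or, not_lt] using ht

lemma eq_of_mem_Ioo_div_of_mem_Ioo_div {c t : ℝ} (hc : 0 < c) {i j : ℕ}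
    (hi : t ∈ Ioo ((i : ℝ) / c) (((i : ℝ) + 1) / c))
    (hj : t ∈ Ioo ((j : ℝ) / c) (((j : ℝ) + 1) / c)) : i = j := by
  have hij : (i : ℝ) < j + 1 := (div_lt_div_iff_of_pos_right hc).mp (hi.1.trans hj.2)
  have hji : (j : ℝ) < i + 1 := (div_lt_div_iff_of_pos_right hc).mp (hj.1.trans hi.2)
  norm_cast at hij hji
  omega

lemma support_integral_haar_subsingleton (l : ℕ) {t : ℝ} (ht : 0 ≤ t) :
    (Function.support fun k : Fin (2 ^ l) ↦ ∫ x in (0 : ℝ)..t, haar l k x).Subsingleton := by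
  have hmem (k : Fin (2 ^ l)) (hk : ∫ x in (0 : ℝ)..t, haar l k x ≠ 0) :
      t ∈ Ioo ((k : ℝ) / 2 ^ l) (((k : ℝ) + 1) / 2 ^ l) :=
    of_not_not (mt (integral_haar_eq_zero l k ht) hk)
  intro i hi j hj
  exact Fin.ext (eq_of_mem_Ioo_div_of_mem_Ioo_div (by positivity) (hmem i hi) (hmem j hj))

lemma sum_abs_mul_integral_haar_le {l : ℕ} (a : Fin (2 ^ l) → ℝ) {C t : ℝ}
    (ha : ∀ k, |a k| ≤ C) (ht : 0 ≤ t) :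
    ∑ k, |a k * ∫ x in (0 : ℝ)..t, haar l k x| ≤ C * (2 : ℝ) ^ (-(l : ℝ) / 2 - 1) := by
  have hC : 0 ≤ C := (abs_nonneg _).trans (ha ⟨0, by positivity⟩)
  refine Finset.sum_le_of_support_subsingleton (by positivity) (fun k ↦ ?_) ?_
  · rw [abs_mul]
    exact mul_le_mul (ha k) (abs_integral_haar_le l k ht) (abs_nonneg _) hC
  · refine (support_integral_haar_subsingleton l ht).anti fun k hk ↦ ?_
    simp only [Function.mem_support, abs_ne_zero, mul_ne_zero_iff] at hk ⊢
    exact hk.2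

theorem primitive_map_bounded_on_M0_general
    (w : ℕ → ℝ)
    (hsum : Summable (fun l : ℕ => w l * (2 : ℝ) ^ (-(l : ℝ) / 2)))
    (h : ℕ → ℕ → ℝ) (ε : ℝ)
    (hε : ∀ l k : ℕ, k < 2 ^ l → |h l k| ≤ ε * w l)
    (t : ℝ) (ht : t ∈ Set.Icc (0 : ℝ) 1) :
    Summable (fun p : (l : ℕ) × Fin (2 ^ l) =>
        |h p.1 (p.2 : ℕ) * ∫ x in (0 : ℝ)..t, haar p.1 (p.2 : ℕ) x|) ∧
      |∑' p : (l : ℕ) × Fin (2 ^ l),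
          h p.1 (p.2 : ℕ) * ∫ x in (0 : ℝ)..t, haar p.1 (p.2 : ℕ) x| ≤
        (∑' l : ℕ, w l * (2 : ℝ) ^ (-(l : ℝ) / 2 - 1)) * ε := by
  have hweights : Summable fun l : ℕ ↦ w l * (2 : ℝ) ^ (-(l : ℝ) / 2 - 1) * ε := by
    simpa only [Real.rpow_sub_one two_ne_zero, mul_div_assoc] using
      (hsum.div_const 2).mul_right ε
  have hlevel (l : ℕ) : ∑ k : Fin (2 ^ l), |h l k * ∫ x in (0 : ℝ)..t, haar l k x| ≤
      w l * (2 : ℝ) ^ (-(l : ℝ) / 2 - 1) * ε :=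
    (sum_abs_mul_integral_haar_le _ (fun k ↦ hε l k k.2) ht.1).trans_eq (by ring)
  refine ⟨summable_abs_sigma_of_sum_abs_le hweights hlevel, ?_⟩
  rw [← tsum_mul_right]
  exact abs_tsum_sigma_le_of_sum_abs_le hweights hlevel

/-- If `w l ≥ 1` with `Σ_l w_l 2^{−l/2} < ∞`, and the double sequence
`h` has multiscale norm at most `ε` (i.e. `|h l k| ≤ ε · w l` for all `l ≥ 0`, `k < 2^l`),
then for every `t ∈ [0,1]` the series `Σ_{l,k} h_{l,k} ∫₀^t ψ_{l,k}` converges absolutely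
and `|Σ_{l,k} h_{l,k} ∫₀^t ψ_{l,k}| ≤ (Σ_l w_l 2^{−l/2−1}) · ε`. -/
theorem primitive_map_bounded_on_M0
    (w : ℕ → ℝ) (hw : ∀ l, 1 ≤ w l)
    (hsum : Summable (fun l : ℕ => w l * (2 : ℝ) ^ (-(l : ℝ) / 2)))
    (h : ℕ → ℕ → ℝ) (ε : ℝ)
    (hε : ∀ l k : ℕ, k < 2 ^ l → |h l k| ≤ ε * w l)
    (t : ℝ) (ht : t ∈ Set.Icc (0 : ℝ) 1) :
    Summable (fun p : (l : ℕ) × Fin (2 ^ l) =>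
        |h p.1 (p.2 : ℕ) * ∫ x in (0 : ℝ)..t, haar p.1 (p.2 : ℕ) x|) ∧
      |∑' p : (l : ℕ) × Fin (2 ^ l),
          h p.1 (p.2 : ℕ) * ∫ x in (0 : ℝ)..t, haar p.1 (p.2 : ℕ) x| ≤
        (∑' l : ℕ, w l * (2 : ℝ) ^ (-(l : ℝ) / 2 - 1)) * ε :=
  primitive_map_bounded_on_M0_general w hsum h ε hε t ht
end

section
/- Let D ≥ 1 and let X_1, …, X_n be i.i.d. random variables taking values in [0,1] whose common law has a density f with ‖f‖_∞ ≤ D. Then there exists a constant C depending only on D such that for all integers 1 ≤ J < j with 2^j · j ≤ n, E[ max over pairs (l,k) with J < l ≤ j and 0 ≤ k < 2^l of l^{−1/2} · | n^{−1/2} Σ_{i=1}^n ( ψ_{l,k}(X_i) − E[ψ_{l,k}(X_1)] ) | ] ≤ C. -/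
/-!
For fixed `(l, k)` the summands `ψ_{l,k}(X_i) - E ψ_{l,k}(X_1)` are independent, centred, bounded
by `2 · 2^{l/2}` and of variance at most `‖f‖_∞ ∫ ψ_{l,k}² ≤ D`. Since `e^x ≤ 1 + x + x²` for
`|x| ≤ 1`, their sum `S_{l,k}` satisfies the Bernstein-type bound
`E exp (t |S_{l,k}|) ≤ 2 exp (n t² D)` as long as `|t| · 2 · 2^{l/2} ≤ 1`; the choice
`t = √l / (2 √n)` is admissible because `l 2^l ≤ 2^j j ≤ n`, and gives `2 exp (l D / 4)`.
For the maximum, bound each term `u` by `t₀ + L⁻¹ e^{L (u - t₀)}` with `L = l / 2` and replace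
the maximum of the exponentials by their sum. Taking expectations leaves
`t₀ + Σ_l 2^l (2 / l) e^{-l t₀ / 2} · 2 e^{l D / 4}`, and with `t₀ = D / 2 + 4 log 2` the
level-`l` summand is at most `4 · 2^{-l}`.
-/

open MeasureTheory ProbabilityTheory

open Real Finset

lemma sq_two_rpow_div_two (l : ℕ) : ((2 : ℝ) ^ ((l : ℝ) / 2)) ^ 2 = 2 ^ l := by
  rw [← rpow_natCast _ 2, ← rpow_mul zero_le_two]
  norm_num

lemma measurable_haar (l k : ℕ) : Measurable (haar l k) :=
  Measurable.ite measurableSet_Ioc measurable_const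
    (Measurable.ite measurableSet_Ioc measurable_const measurable_const)

lemma abs_haar_le (l k : ℕ) (x : ℝ) : |haar l k x| ≤ 2 ^ ((l : ℝ) / 2) := by
  unfold haar
  split_ifs <;> simp [abs_of_nonneg, rpow_nonneg]

lemma haar_sq (l k : ℕ) (x : ℝ) :
    haar l k x ^ 2
      = (Set.Ioc ((k : ℝ) / 2 ^ l) ((k + 1) / 2 ^ l)).indicator (fun _ ↦ 2 ^ l) x := by
  have hmid₁ : (k : ℝ) / 2 ^ l ≤ (k + 1 / 2) / 2 ^ l := by gcongr; norm_num
  have hmid₂ : ((k : ℝ) + 1 / 2) / 2 ^ l ≤ (k + 1) / 2 ^ l := by gcongr; norm_num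
  unfold haar
  split_ifs with h₁ h₂
  · rw [Set.indicator_of_mem (Set.mem_Ioc.mpr ⟨h₁.1, h₁.2.trans hmid₂⟩), sq_two_rpow_div_two]
  · rw [Set.indicator_of_mem (Set.mem_Ioc.mpr ⟨hmid₁.trans_lt h₂.1, h₂.2⟩), neg_sq,
      sq_two_rpow_div_two]
  · rw [Set.indicator_of_notMem, zero_pow two_ne_zero]
    rintro ⟨ha, hb⟩
    rcases le_or_gt x ((k + 1 / 2) / 2 ^ l) with h | h
    exacts [h₁ ⟨ha, h⟩, h₂ ⟨h, hb⟩]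

lemma integrable_haar_sq (l k : ℕ) : Integrable (fun x ↦ haar l k x ^ 2) := by
  simp_rw [haar_sq]
  exact (integrableOn_const (by simp)).integrable_indicator measurableSet_Ioc

lemma integral_haar_sq (l k : ℕ) : ∫ x, haar l k x ^ 2 = 1 := by
  simp_rw [haar_sq]
  rw [integral_indicator measurableSet_Ioc, setIntegral_const, measureReal_def, volume_Ioc,
    ENNReal.toReal_ofReal (sub_nonneg.mpr (by gcongr; norm_num)), smul_eq_mul, ← sub_div,
    add_sub_cancel_left, one_div, inv_mul_cancel₀ (by positivity)]

lemma integral_withDensity_le_mul_integral {α : Type*} [MeasurableSpace α] {ν : Measure α}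
    {f h : α → ℝ} {D : ℝ} (hf : Measurable f) (hf₀ : ∀ᵐ x ∂ν, 0 ≤ f x)
    (hfD : ∀ᵐ x ∂ν, f x ≤ D) (hh₀ : ∀ x, 0 ≤ h x) (hh : Integrable h ν) :
    ∫ x, h x ∂ν.withDensity (fun x ↦ ENNReal.ofReal (f x)) ≤ D * ∫ x, h x ∂ν := by
  rw [← integral_const_mul]
  change ∫ x, h x ∂ν.withDensity (fun x ↦ ((f x).toNNReal : ENNReal)) ≤ _
  rw [integral_withDensity_eq_integral_smul hf.real_toNNReal]
  simp only [NNReal.smul_def, smul_eq_mul]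
  refine integral_mono_of_nonneg (ae_of_all _ fun x ↦ mul_nonneg (by positivity) (hh₀ x))
    (hh.const_mul D) ?_
  filter_upwards [hf₀, hfD] with x h₀ h₁
  rw [Real.coe_toNNReal _ h₀]
  exact mul_le_mul_of_nonneg_right h₁ (hh₀ x)

lemma variance_haar_le {f : ℝ → ℝ} {D : ℝ} (hf : Measurable f) (hf₀ : ∀ᵐ x, 0 ≤ f x)
    (hfD : ∀ᵐ x, f x ≤ D)
    [IsProbabilityMeasure (volume.withDensity fun x ↦ ENNReal.ofReal (f x))] (l k : ℕ) :
    Var[haar l k; volume.withDensity fun x ↦ ENNReal.ofReal (f x)] ≤ D :=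
  calc _ ≤ ∫ x, haar l k x ^ 2 ∂volume.withDensity fun x ↦ ENNReal.ofReal (f x) :=
        variance_le_expectation_sq (measurable_haar l k).aestronglyMeasurable
    _ ≤ D * ∫ x, haar l k x ^ 2 :=
        integral_withDensity_le_mul_integral hf hf₀ hfD (fun _ ↦ sq_nonneg _)
          (integrable_haar_sq l k)
    _ = D := by rw [integral_haar_sq, mul_one]

lemma sum_two_pow_mul_exp_le (D : ℝ) (J j : ℕ) :
    ∑ l ∈ Ioc J j, (2 : ℝ) ^ l * (((l : ℝ) / 2)⁻¹ * exp (-((l : ℝ) / 2 * (D / 2 + 4 * log 2)))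
      * (2 * exp (l * D / 4))) ≤ 8 := by
  have hterm : ∀ l ∈ Ioc J j, (2 : ℝ) ^ l * (((l : ℝ) / 2)⁻¹
      * exp (-((l : ℝ) / 2 * (D / 2 + 4 * log 2))) * (2 * exp (l * D / 4)))
      ≤ 4 * (1 / 2) ^ l := by
    intro l hl
    have hl₁ : (1 : ℝ) ≤ l := by exact_mod_cast (Nat.zero_le J).trans_lt (mem_Ioc.mp hl).1
    have hexp :
        exp (-((l : ℝ) / 2 * (D / 2 + 4 * log 2))) * exp (l * D / 4) = (1 / 4) ^ l := by
      rw [← exp_add, show -((l : ℝ) / 2 * (D / 2 + 4 * log 2)) + l * D / 4 = l * -log 4 by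
        rw [show (4 : ℝ) = 2 ^ 2 by norm_num, log_pow]; push_cast; ring,
        exp_nat_mul, exp_neg, exp_log (by norm_num), one_div]
    calc _ = 2 * ((l : ℝ) / 2)⁻¹ * (2 ^ l * (exp (-((l : ℝ) / 2 * (D / 2 + 4 * log 2)))
          * exp (l * D / 4))) := by ring
      _ = 2 * ((l : ℝ) / 2)⁻¹ * (1 / 2) ^ l := by rw [hexp, ← mul_pow]; norm_num
      _ ≤ 2 * 2 * (1 / 2) ^ l := by
          gcongr
          rw [inv_le_comm₀ (by positivity) two_pos]
          linarith
      _ = 4 * (1 / 2) ^ l := by norm_num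
  calc _ ≤ ∑ l ∈ Ioc J j, 4 * (1 / 2 : ℝ) ^ l := sum_le_sum hterm
    _ ≤ ∑ l ∈ range (j + 1), 4 * (1 / 2 : ℝ) ^ l :=
        sum_le_sum_of_subset_of_nonneg (fun l hl ↦ by simp at hl ⊢; omega)
          fun _ _ _ ↦ by positivity
    _ ≤ 4 * 2 := by rw [← mul_sum]; gcongr; exact sum_geometric_two_le _
    _ = 8 := by norm_num

lemma div_two_mul_inv_sqrt_mul_abs (l n : ℕ) (s : ℝ) :
    (l : ℝ) / 2 * ((√l)⁻¹ * |(√n)⁻¹ * s|) = √l / (2 * √n) * |s| := by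
  rw [abs_mul, abs_inv, abs_of_nonneg (sqrt_nonneg _)]
  calc _ = (l : ℝ) / √l / (2 * √n) * |s| := by ring
    _ = _ := by rw [div_sqrt]

lemma abs_sqrt_div_mul_le_one {l n : ℕ} (h : l * 2 ^ l ≤ n) :
    |√l / (2 * √n)| * (2 * 2 ^ ((l : ℝ) / 2)) ≤ 1 := by
  rw [← abs_of_nonneg (by positivity : (0 : ℝ) ≤ 2 * 2 ^ ((l : ℝ) / 2)), ← abs_mul,
    ← sq_le_one_iff_abs_le_one, mul_pow, div_pow, mul_pow, mul_pow, sq_sqrt (Nat.cast_nonneg _),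
    sq_sqrt (Nat.cast_nonneg _), sq_two_rpow_div_two]
  rcases Nat.eq_zero_or_pos n with rfl | hn
  · simp
  rw [div_mul_eq_mul_div, div_le_one (by positivity)]
  have : (l : ℝ) * 2 ^ l ≤ n := by exact_mod_cast h
  nlinarith

lemma Real.exp_le_one_add_add_sq {x : ℝ} (hx : |x| ≤ 1) : exp x ≤ 1 + x + x ^ 2 := by
  linarith [(abs_le.mp (abs_exp_sub_one_sub_id_le hx)).2]

section Probability

variable {Ω : Type*} {mΩ : MeasurableSpace Ω} {P : Measure Ω}

lemma mgf_sub_integral_le [IsProbabilityMeasure P] {Y : Ω → ℝ} {b t : ℝ}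
    (hY : AEMeasurable Y P) (hb : ∀ᵐ ω ∂P, |Y ω| ≤ b) (ht : |t| * (2 * b) ≤ 1) :
    mgf (fun ω ↦ Y ω - P[Y]) P t ≤ exp (t ^ 2 * Var[Y; P]) := by
  have hYint : Integrable Y P := .of_bound hY.aestronglyMeasurable b hb
  have hmean : |P[Y]| ≤ b := by
    simpa using norm_integral_le_of_norm_le_const (μ := P) (f := Y) hb
  have htZ : ∀ᵐ ω ∂P, |t * (Y ω - P[Y])| ≤ 1 := by
    filter_upwards [hb] with ω hω
    calc |t * (Y ω - P[Y])| = |t| * |Y ω - P[Y]| := abs_mul _ _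
      _ ≤ |t| * (2 * b) := by gcongr; linarith [abs_sub (Y ω) P[Y]]
      _ ≤ 1 := ht
  have hZint : Integrable (fun ω ↦ t * (Y ω - P[Y])) P :=
    (hYint.sub (integrable_const _)).const_mul t
  have hZ2int : Integrable (fun ω ↦ (t * (Y ω - P[Y])) ^ 2) P :=
    .of_bound (hZint.aestronglyMeasurable.pow 2) 1 <| htZ.mono fun ω h ↦ by
      rw [norm_pow, norm_eq_abs]; exact pow_le_one₀ (abs_nonneg _) h
  have hexpint : Integrable (fun ω ↦ exp (t * (Y ω - P[Y]))) P :=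
    .of_bound (continuous_exp.comp_aestronglyMeasurable hZint.aestronglyMeasurable) (exp 1) <|
      htZ.mono fun ω h ↦ by
        rw [norm_eq_abs, abs_exp]; exact exp_le_exp.mpr ((le_abs_self _).trans h)
  have hcentered : ∫ ω, t * (Y ω - P[Y]) ∂P = 0 := by
    rw [integral_const_mul, integral_sub hYint (integrable_const _), integral_const]
    simp
  have h1Zint : Integrable (fun ω ↦ 1 + t * (Y ω - P[Y])) P := (integrable_const 1).add hZint
  calc mgf (fun ω ↦ Y ω - P[Y]) P t
      ≤ ∫ ω, (1 + t * (Y ω - P[Y]) + (t * (Y ω - P[Y])) ^ 2) ∂P :=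
        integral_mono_ae hexpint (h1Zint.add hZ2int)
          (htZ.mono fun ω h ↦ exp_le_one_add_add_sq h)
    _ = 1 + t ^ 2 * Var[Y; P] := by
        rw [integral_add h1Zint hZ2int,
          integral_add (integrable_const 1) hZint, hcentered, variance_eq_integral hY]
        simp_rw [mul_pow]
        rw [integral_const_mul]
        simp
    _ ≤ exp (t ^ 2 * Var[Y; P]) := by linarith [add_one_le_exp (t ^ 2 * Var[Y; P])]

section EmpiricalSum

variable {ι α : Type*} [Fintype ι] {mα : MeasurableSpace α} {μ : Measure α} {X : ι → Ω → α}
  {g : α → ℝ} {b : ℝ}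

lemma abs_sum_sub_integral_le (hgb : ∀ x, |g x| ≤ b) (ω : Ω) :
    |∑ i, (g (X i ω) - ∫ x, g x ∂μ)| ≤ Fintype.card ι * (b + |∫ x, g x ∂μ|) := by
  calc |∑ i, (g (X i ω) - ∫ x, g x ∂μ)| ≤ ∑ i, |g (X i ω) - ∫ x, g x ∂μ| :=
        abs_sum_le_sum_abs _ _
    _ ≤ ∑ _i : ι, (b + |∫ x, g x ∂μ|) := by
        gcongr with i; exact (abs_sub _ _).trans (by gcongr; exact hgb _)
    _ = Fintype.card ι * (b + |∫ x, g x ∂μ|) := by simp [mul_add]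

lemma integrable_exp_mul_sum_sub_integral [IsFiniteMeasure P] (hX : ∀ i, Measurable (X i))
    (hg : Measurable g) (hgb : ∀ x, |g x| ≤ b) (t : ℝ) :
    Integrable (fun ω ↦ exp (t * ∑ i, (g (X i ω) - ∫ x, g x ∂μ))) P :=
  integrable_exp_mul_of_mem_Icc (by fun_prop)
    (ae_of_all _ fun ω ↦ abs_le.mp (abs_sum_sub_integral_le hgb ω))

lemma integrable_exp_mul_abs_sum_sub_integral [IsFiniteMeasure P] (hX : ∀ i, Measurable (X i))
    (hg : Measurable g) (hgb : ∀ x, |g x| ≤ b) (t : ℝ) :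
    Integrable (fun ω ↦ exp (t * |∑ i, (g (X i ω) - ∫ x, g x ∂μ)|)) P :=
  integrable_exp_mul_of_mem_Icc (by fun_prop)
    (ae_of_all _ fun ω ↦ ⟨abs_nonneg _, abs_sum_sub_integral_le hgb ω⟩)

lemma mgf_sum_sub_integral_le [IsProbabilityMeasure μ] (hX : ∀ i, Measurable (X i))
    (hmap : ∀ i, P.map (X i) = μ) (hind : iIndepFun X P) (hg : Measurable g)
    (hgb : ∀ x, |g x| ≤ b) {t : ℝ} (ht : |t| * (2 * b) ≤ 1) :
    mgf (fun ω ↦ ∑ i, (g (X i ω) - ∫ x, g x ∂μ)) P t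
      ≤ exp (Fintype.card ι * t ^ 2 * Var[g; μ]) := by
  have hc : Measurable fun x ↦ g x - ∫ x, g x ∂μ := hg.sub measurable_const
  have hsum : (fun ω ↦ ∑ i, (g (X i ω) - ∫ x, g x ∂μ))
      = ∑ i, (fun x ↦ g x - ∫ x, g x ∂μ) ∘ X i := by
    ext ω; simp
  rw [hsum, (hind.comp _ fun _ ↦ hc).mgf_sum (fun i ↦ hc.comp (hX i))]
  calc ∏ i, mgf ((fun x ↦ g x - ∫ x, g x ∂μ) ∘ X i) P t
      = ∏ _i : ι, mgf (fun x ↦ g x - ∫ x, g x ∂μ) μ t := by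
        refine prod_congr rfl fun i _ ↦ ?_
        rw [← hmap i, mgf_map (hX i).aemeasurable (by fun_prop)]
    _ ≤ ∏ _i : ι, exp (t ^ 2 * Var[g; μ]) :=
        prod_le_prod (fun _ _ ↦ mgf_nonneg) fun _ _ ↦
          mgf_sub_integral_le hg.aemeasurable (ae_of_all _ hgb) ht
    _ = exp (Fintype.card ι * t ^ 2 * Var[g; μ]) := by
        rw [prod_const, card_univ, ← exp_nat_mul, mul_assoc]

lemma integral_exp_mul_abs_sum_sub_integral_le [IsProbabilityMeasure μ]
    (hX : ∀ i, Measurable (X i)) (hmap : ∀ i, P.map (X i) = μ) (hind : iIndepFun X P)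
    (hg : Measurable g) (hgb : ∀ x, |g x| ≤ b) {t : ℝ} (ht : |t| * (2 * b) ≤ 1) :
    ∫ ω, exp (t * |∑ i, (g (X i ω) - ∫ x, g x ∂μ)|) ∂P
      ≤ 2 * exp (Fintype.card ι * t ^ 2 * Var[g; μ]) := by
  have := hind.isProbabilityMeasure
  have hint := integrable_exp_mul_sum_sub_integral (P := P) (μ := μ) hX hg hgb
  calc ∫ ω, exp (t * |∑ i, (g (X i ω) - ∫ x, g x ∂μ)|) ∂P
      ≤ ∫ ω, (exp (t * ∑ i, (g (X i ω) - ∫ x, g x ∂μ))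
          + exp (-t * ∑ i, (g (X i ω) - ∫ x, g x ∂μ))) ∂P := by
        refine integral_mono (integrable_exp_mul_abs_sum_sub_integral hX hg hgb t)
          ((hint t).add (hint (-t))) fun ω ↦ ?_
        rw [neg_mul]
        refine (exp_le_exp.mpr ?_).trans (exp_abs_le _)
        rw [abs_mul]
        exact mul_le_mul_of_nonneg_right (le_abs_self t) (abs_nonneg _)
    _ = mgf (fun ω ↦ ∑ i, (g (X i ω) - ∫ x, g x ∂μ)) P t
          + mgf (fun ω ↦ ∑ i, (g (X i ω) - ∫ x, g x ∂μ)) P (-t) :=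
        integral_add (hint t) (hint (-t))
    _ ≤ 2 * exp (Fintype.card ι * t ^ 2 * Var[g; μ]) := by
        have hpos := mgf_sum_sub_integral_le hX hmap hind hg hgb ht
        have hneg := mgf_sum_sub_integral_le hX hmap hind hg hgb (t := -t) (by rwa [abs_neg])
        rw [neg_sq] at hneg
        linarith

end EmpiricalSum

lemma le_add_inv_mul_exp_mul (u t₀ : ℝ) {L : ℝ} (hL : 0 < L) :
    u ≤ t₀ + L⁻¹ * exp (-(L * t₀)) * exp (L * u) := by
  have key : L * (u - t₀) ≤ L * (L⁻¹ * exp (-(L * t₀)) * exp (L * u)) := by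
    rw [← mul_assoc, ← mul_assoc, mul_inv_cancel₀ hL.ne', one_mul, ← exp_add,
      show -(L * t₀) + L * u = L * (u - t₀) by ring]
    linarith [add_one_le_exp (L * (u - t₀))]
  linarith [le_of_mul_le_mul_left key hL]

lemma integral_sup'_sup'_le [IsProbabilityMeasure P] {ι κ : Type*} {s : Finset ι}
    {t : ι → Finset κ} (hs : s.Nonempty) (ht : ∀ i, (t i).Nonempty) {Y : ι → κ → Ω → ℝ}
    (hY : ∀ i k ω, 0 ≤ Y i k ω) {L M : ι → ℝ} (hL : ∀ i ∈ s, 0 < L i)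
    (hint : ∀ i ∈ s, ∀ k ∈ t i, Integrable (fun ω ↦ exp (L i * Y i k ω)) P)
    (hM : ∀ i ∈ s, ∀ k ∈ t i, ∫ ω, exp (L i * Y i k ω) ∂P ≤ M i) (t₀ : ℝ) :
    ∫ ω, s.sup' hs (fun i ↦ (t i).sup' (ht i) fun k ↦ Y i k ω) ∂P
      ≤ t₀ + ∑ i ∈ s, #(t i) * ((L i)⁻¹ * exp (-(L i * t₀)) * M i) := by
  set G : Ω → ℝ := fun ω ↦
    ∑ i ∈ s, ∑ k ∈ t i, (L i)⁻¹ * exp (-(L i * t₀)) * exp (L i * Y i k ω)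
  have hterm : ∀ i ∈ s, ∀ k ω, 0 ≤ (L i)⁻¹ * exp (-(L i * t₀)) * exp (L i * Y i k ω) :=
    fun i hi _ _ ↦ have := hL i hi; by positivity
  have hGint : Integrable G P := integrable_finsetSum _ fun i hi ↦
    integrable_finsetSum _ fun k hk ↦ (hint i hi k hk).const_mul _
  have hmax : ∀ ω, s.sup' hs (fun i ↦ (t i).sup' (ht i) fun k ↦ Y i k ω) ≤ t₀ + G ω := by
    refine fun ω ↦ sup'_le _ _ fun i hi ↦ sup'_le _ _ fun k hk ↦ ?_
    refine (le_add_inv_mul_exp_mul _ t₀ (hL i hi)).trans ((add_le_add_iff_left t₀).mpr ?_)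
    exact (single_le_sum (fun k' _ ↦ hterm i hi k' ω) hk).trans
      (single_le_sum (f := fun i ↦ ∑ k ∈ t i, _) (fun i' hi' ↦ sum_nonneg fun k' _ ↦
        hterm i' hi' k' ω) hi)
  have hmax₀ : ∀ ω, 0 ≤ s.sup' hs (fun i ↦ (t i).sup' (ht i) fun k ↦ Y i k ω) := by
    obtain ⟨i, hi⟩ := hs
    obtain ⟨k, hk⟩ := ht i
    exact fun ω ↦ (hY i k ω).trans (le_sup'_of_le _ hi (le_sup'_of_le _ hk le_rfl))
  calc _ ≤ ∫ ω, (t₀ + G ω) ∂P :=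
        integral_mono_of_nonneg (ae_of_all _ hmax₀) ((integrable_const t₀).add hGint)
          (ae_of_all _ hmax)
    _ = t₀ + ∑ i ∈ s, ∑ k ∈ t i,
          (L i)⁻¹ * exp (-(L i * t₀)) * ∫ ω, exp (L i * Y i k ω) ∂P := by
        rw [integral_add (integrable_const _) hGint, integral_const, integral_finsetSum _
          fun i hi ↦ integrable_finsetSum _ fun k hk ↦ (hint i hi k hk).const_mul _]
        simp only [probReal_univ, one_smul]
        congr 1
        refine sum_congr rfl fun i hi ↦ ?_
        rw [integral_finsetSum _ fun k hk ↦ (hint i hi k hk).const_mul _]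
        simp only [integral_const_mul]
    _ ≤ t₀ + ∑ i ∈ s, ∑ k ∈ t i, (L i)⁻¹ * exp (-(L i * t₀)) * M i := by
        gcongr with i hi k hk
        · have := hL i hi; positivity
        · exact hM i hi k hk
    _ = t₀ + ∑ i ∈ s, #(t i) * ((L i)⁻¹ * exp (-(L i * t₀)) * M i) := by
        simp only [sum_const, nsmul_eq_mul]

end Probability

/-- Let `D ≥ 1` and let `X 0, …, X (n-1)` be i.i.d. on `[0,1]` with density
`f`, `‖f‖_∞ ≤ D`. There is a constant `C` (depending only on `D`) such that for all
`1 ≤ J < j` with `2^j · j ≤ n`,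
`E[max_{J < l ≤ j, 0 ≤ k < 2^l} l^{−1/2} |n^{−1/2} Σ_{i<n} (ψ_{l,k}(X_i) − Eψ_{l,k}(X_0))|] ≤ C`. -/
theorem empirical_wavelet_block_max_expectation (D : ℝ) :
    ∃ C : ℝ,
      ∀ (Ω : Type) (_ : MeasurableSpace Ω) (P : Measure Ω), IsProbabilityMeasure P →
      ∀ (n : ℕ) (X : Fin n → Ω → ℝ) (f : ℝ → ℝ), Measurable f →
      (∀ᵐ x ∂(volume : Measure ℝ), 0 ≤ f x) →
      (∀ᵐ x ∂(volume : Measure ℝ), x ∉ Set.Icc (0 : ℝ) 1 → f x = 0) →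
      (∀ᵐ x ∂(volume : Measure ℝ), f x ≤ D) →
      ∀ (μ : Measure ℝ), μ = volume.withDensity (fun x => ENNReal.ofReal (f x)) →
      (∀ i, Measurable (X i)) →
      (∀ i, Measure.map (X i) P = μ) →
      iIndepFun X P →
      ∀ (J j : ℕ) (hJ : 1 ≤ J) (hJj : J < j), 2 ^ j * j ≤ n →
        ∫ ω, (Finset.Ioc J j).sup' (Finset.nonempty_Ioc.mpr hJj)
            (fun l => (Finset.range (2 ^ l)).sup'
              (Finset.nonempty_range_iff.mpr (by positivity))
              (fun k => (Real.sqrt l)⁻¹ *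
                |(Real.sqrt n)⁻¹ * ∑ i, (haar l k (X i ω) - ∫ x, haar l k x ∂μ)|)) ∂P
          ≤ C := by
  refine ⟨D / 2 + 4 * log 2 + 8, ?_⟩
  rintro Ω _ P hP n X f hf hf₀ - hfD μ rfl hX hmap hind J j - hJj hn
  have hn₀ : 0 < n := (Nat.mul_pos (by positivity) ((Nat.zero_le J).trans_lt hJj)).trans_le hn
  have : IsProbabilityMeasure (volume.withDensity fun x ↦ ENNReal.ofReal (f x)) :=
    hmap ⟨0, hn₀⟩ ▸ Measure.isProbabilityMeasure_map (hX _).aemeasurable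
  have hlevel : ∀ l ∈ Ioc J j, l * 2 ^ l ≤ n := fun l hl ↦
    (Nat.mul_le_mul (mem_Ioc.mp hl).2 (Nat.pow_le_pow_right two_pos (mem_Ioc.mp hl).2)).trans
      (by rwa [mul_comm])
  refine le_trans (integral_sup'_sup'_le _ _ (fun _ _ _ ↦ ?_) (L := fun l : ℕ ↦ (l : ℝ) / 2)
    (M := fun l : ℕ ↦ 2 * exp (l * D / 4)) (fun l hl ↦ ?_) (fun l _ k _ ↦ ?_)
    (fun l hl k _ ↦ ?_) (D / 2 + 4 * log 2)) ?_
  · positivity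
  · have : 0 < l := (Nat.zero_le J).trans_lt (mem_Ioc.mp hl).1
    positivity
  · simp only [div_two_mul_inv_sqrt_mul_abs]
    exact integrable_exp_mul_abs_sum_sub_integral hX (measurable_haar l k) (abs_haar_le l k) _
  · simp only [div_two_mul_inv_sqrt_mul_abs]
    refine (integral_exp_mul_abs_sum_sub_integral_le hX hmap hind (measurable_haar l k)
      (abs_haar_le l k) (abs_sqrt_div_mul_le_one (hlevel l hl))).trans ?_
    gcongr
    calc _ ≤ n * (√l / (2 * √n)) ^ 2 * D := by
          rw [Fintype.card_fin]
          gcongr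
          exact variance_haar_le hf hf₀ hfD l k
      _ = l * D / 4 := by
          rw [div_pow, mul_pow, sq_sqrt (Nat.cast_nonneg _), sq_sqrt (Nat.cast_nonneg _)]
          field_simp
          ring
  · simp only [card_range, Nat.cast_pow, Nat.cast_ofNat]
    linarith [sum_two_pow_mul_exp_le D J j]
end
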